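/- arXiv:2412.03269 — 5 statements merged into one kernel-verified Lean document; each statement's English description precedes it below -/
import Mathlib

section
/- (Grothendieck's identity) Let u, v ∈ ℝⁿ be fixed unit vectors and let g be a standard Gaussian vector in ℝⁿ. Then E[sign(⟨g,u⟩) · sign(⟨g,v⟩)] = (2/π) · arcsin(⟨u,v⟩). -/
/-!
Let `ρ = ⟪u, v⟫ = cos φ` with `φ ∈ [0, π]`. If `ρ = ±1` then `v = ±u` and the integrand is
`±1` off the null hyperplane `⟪u, x⟫ = 0`. Otherwise write `v = cos φ • u + sin φ • w` with `w` a
unit vector orthogonal to `u`. The pair `(⟪u, x⟫, ⟪w, x⟫)` is a Gaussian vector with identity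
covariance, hence a pair of independent standard Gaussians. In polar coordinates the integrand
becomes `sign (cos θ) * sign (cos (θ - φ))`, which is `-1` on an arc of length `2φ` and `1` on the
rest of the circle, so the expectation is `1 - 2φ/π = (2/π) arcsin ρ`.
-/

open MeasureTheory ProbabilityTheory Real Set WithLp
open scoped RealInnerProductSpace

/-- The standard Gaussian measure on `ℝⁿ` (product of standard 1D Gaussians). -/
noncomputable def stdGaussianPi (n : ℕ) : Measure (Fin n → ℝ) :=
  Measure.pi fun _ => gaussianReal 0 1

namespace Real

@[fun_prop]
lemma measurable_sign : Measurable Real.sign :=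
  Measurable.ite (measurableSet_lt measurable_id measurable_const) measurable_const
    (Measurable.ite (measurableSet_lt measurable_const measurable_id) measurable_const
      measurable_const)

lemma abs_sign_le_one (r : ℝ) : |sign r| ≤ 1 := by
  rcases sign_apply_eq r with h | h | h <;> simp [h]

lemma sign_mul_of_pos {c : ℝ} (hc : 0 < c) (r : ℝ) : sign (c * r) = sign r := by
  rcases lt_trichotomy r 0 with h | rfl | h
  · rw [sign_of_neg h, sign_of_neg (mul_neg_of_pos_of_neg hc h)]
  · simp
  · rw [sign_of_pos h, sign_of_pos (mul_pos hc h)]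

lemma sign_mul_sign_mul_of_ne_zero {t : ℝ} (ht : t ≠ 0) (c : ℝ) :
    sign t * sign (c * t) = sign c := by
  rcases ht.lt_or_gt with ht | ht <;> rcases lt_trichotomy c 0 with hc | hc | hc <;>
    simp [sign_of_pos, sign_of_neg, ht, hc, mul_neg_of_pos_of_neg, mul_pos_of_neg_of_neg,
      mul_neg_of_neg_of_pos]

end Real

lemma intervalIntegral_of_eqOn_Ioo_const {f : ℝ → ℝ} {a b c : ℝ} (hab : a ≤ b)
    (h : EqOn f (fun _ ↦ c) (Ioo a b)) : ∫ x in a..b, f x = (b - a) * c := by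
  rw [intervalIntegral.integral_of_le hab, integral_Ioc_eq_integral_Ioo,
    setIntegral_congr_fun measurableSet_Ioo h, setIntegral_const, volume_real_Ioo_of_le hab,
    smul_eq_mul]

lemma intervalIntegrable_sign_cos_mul_sign_cos_sub (φ a b : ℝ) :
    IntervalIntegrable (fun θ ↦ sign (cos θ) * sign (cos (θ - φ))) volume a b := by
  refine (intervalIntegrable_const (c := (1 : ℝ))).mono_fun' (by fun_prop)
    (ae_of_all _ fun θ ↦ ?_)
  simpa [abs_mul] using mul_le_one₀ (abs_sign_le_one _) (abs_nonneg _) (abs_sign_le_one _)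

lemma integral_sign_cos_mul_sign_cos_sub {φ : ℝ} (h0 : 0 ≤ φ) (hπ : φ ≤ π) :
    ∫ θ in Ioo (-π) π, sign (cos θ) * sign (cos (θ - φ)) = 2 * π - 4 * φ := by
  set G : ℝ → ℝ := fun θ ↦ sign (cos θ) * sign (cos (θ - φ))
  have hint := intervalIntegrable_sign_cos_mul_sign_cos_sub φ
  -- shifting by `π` flips the sign of both factors
  have hper : Function.Periodic G π := fun θ ↦ by
    simp only [G, cos_add_pi, add_sub_right_comm, sign_neg, neg_mul_neg]
  have hneg : EqOn G (fun _ ↦ -1) (Ioo (-(π / 2)) (φ - π / 2)) := fun θ hθ ↦ by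
    have h1 : 0 < cos θ := cos_pos_of_mem_Ioo ⟨hθ.1, by linarith [hθ.2]⟩
    have h2 : cos (θ - φ) < 0 := by
      rw [← cos_neg]
      exact cos_neg_of_pi_div_two_lt_of_lt (by linarith [hθ.2]) (by linarith [hθ.1])
    simp [G, sign_of_pos h1, sign_of_neg h2]
  have hpos : EqOn G (fun _ ↦ 1) (Ioo (φ - π / 2) (π / 2)) := fun θ hθ ↦ by
    have h1 : 0 < cos θ := cos_pos_of_mem_Ioo ⟨by linarith [hθ.1], hθ.2⟩
    have h2 : 0 < cos (θ - φ) := cos_pos_of_mem_Ioo ⟨by linarith [hθ.1], by linarith [hθ.2]⟩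
    simp [G, sign_of_pos h1, sign_of_pos h2]
  calc ∫ θ in Ioo (-π) π, G θ = ∫ θ in -π..π, G θ := by
        rw [intervalIntegral.integral_of_le (by linarith [pi_pos]), integral_Ioc_eq_integral_Ioo]
    _ = 2 * ∫ θ in -π..-π + π, G θ := by
        have h := hper.intervalIntegral_add_zsmul_eq 2 (-π) hint
        rw [show -π + (2 : ℤ) • π = π by simp; ring] at h
        simpa using h
    _ = 2 * ∫ θ in -(π / 2)..-(π / 2) + π, G θ := by
        rw [hper.intervalIntegral_add_eq (-π) (-(π / 2))]
    _ = 2 * ((∫ θ in -(π / 2)..φ - π / 2, G θ) + ∫ θ in φ - π / 2..π / 2, G θ) := by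
        rw [intervalIntegral.integral_add_adjacent_intervals (hint _ _) (hint _ _)]
        congr 2; ring
    _ = 2 * π - 4 * φ := by
        rw [intervalIntegral_of_eqOn_Ioo_const (by linarith) hneg,
          intervalIntegral_of_eqOn_Ioo_const (by linarith) hpos]
        ring

lemma integral_mul_exp_neg_sq_div_two : ∫ r in Ioi (0 : ℝ), r * exp (-r ^ 2 / 2) = 1 := by
  have h := integral_mul_cexp_neg_mul_sq (b := 1 / 2) (by norm_num)
  have hc (r : ℝ) : (r : ℂ) * Complex.exp (-(1 / 2) * r ^ 2) = ↑(r * exp (-r ^ 2 / 2)) := by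
    push_cast; ring_nf
  simp_rw [hc, integral_complex_ofReal] at h
  norm_num at h
  exact_mod_cast h

lemma integral_gaussianReal_prod_eq_integral_smul {E : Type*} [NormedAddCommGroup E]
    [NormedSpace ℝ E] (f : ℝ × ℝ → E) :
    ∫ p, f p ∂((gaussianReal 0 1).prod (gaussianReal 0 1)) =
      ∫ p, ((2 * π)⁻¹ * exp (-(p.1 ^ 2 + p.2 ^ 2) / 2)) • f p := by
  rw [gaussianReal_of_var_ne_zero _ one_ne_zero,
    prod_withDensity (measurable_gaussianPDF 0 1) (measurable_gaussianPDF 0 1),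
    ← Measure.volume_eq_prod, integral_withDensity_eq_integral_toReal_smul (by fun_prop)
      (ae_of_all _ fun _ ↦ ENNReal.mul_lt_top gaussianPDF_lt_top gaussianPDF_lt_top)]
  congr 1 with p
  rw [ENNReal.toReal_mul, gaussianPDF_def, ENNReal.toReal_ofReal (gaussianPDFReal_nonneg _ _ _),
    ENNReal.toReal_ofReal (gaussianPDFReal_nonneg _ _ _), gaussianPDFReal_def]
  congr 1
  simp only [NNReal.coe_one, mul_one, sub_zero]
  rw [mul_mul_mul_comm, ← mul_inv, mul_self_sqrt (by positivity), ← exp_add]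
  ring_nf

lemma integral_sign_mul_sign_gaussianReal_prod {φ : ℝ} (h0 : 0 ≤ φ) (hπ : φ ≤ π) :
    ∫ p, sign p.1 * sign (cos φ * p.1 + sin φ * p.2)
      ∂((gaussianReal 0 1).prod (gaussianReal 0 1)) = 1 - 2 * φ / π := by
  have hpolar : EqOn
      (fun q : ℝ × ℝ ↦ q.1 • ((2 * π)⁻¹ * exp (-((polarCoord.symm q).1 ^ 2 +
        (polarCoord.symm q).2 ^ 2) / 2)) • (sign (polarCoord.symm q).1 *
          sign (cos φ * (polarCoord.symm q).1 + sin φ * (polarCoord.symm q).2)))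
      (fun q ↦ (q.1 * exp (-q.1 ^ 2 / 2)) *
        ((2 * π)⁻¹ * (sign (cos q.2) * sign (cos (q.2 - φ)))))
      (Ioi 0 ×ˢ Ioo (-π) π) := by
    rintro ⟨r, θ⟩ ⟨hr, -⟩
    have hsq : (r * cos θ) ^ 2 + (r * sin θ) ^ 2 = r ^ 2 := by
      linear_combination r ^ 2 * cos_sq_add_sin_sq θ
    have hrot : cos φ * (r * cos θ) + sin φ * (r * sin θ) = r * cos (θ - φ) := by
      rw [cos_sub]; ring
    simp only [polarCoord_symm_apply, smul_eq_mul, hsq, hrot, sign_mul_of_pos (mem_Ioi.mp hr)]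
    ring
  rw [integral_gaussianReal_prod_eq_integral_smul, ← integral_comp_polarCoord_symm,
    polarCoord_target, setIntegral_congr_fun (measurableSet_Ioi.prod measurableSet_Ioo) hpolar,
    Measure.volume_eq_prod, setIntegral_prod_mul (fun r ↦ r * exp (-r ^ 2 / 2))
      (fun θ ↦ (2 * π)⁻¹ * (sign (cos θ) * sign (cos (θ - φ)))), integral_mul_exp_neg_sq_div_two,
    integral_const_mul, integral_sign_cos_mul_sign_cos_sub h0 hπ]
  field_simp
  ring

lemma norm_sub_inner_smul_sq {E : Type*} [NormedAddCommGroup E] [InnerProductSpace ℝ E] {u : E}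
    (hu : ‖u‖ = 1) (v : E) : ‖v - ⟪u, v⟫ • u‖ ^ 2 = ‖v‖ ^ 2 - ⟪u, v⟫ ^ 2 := by
  rw [norm_sub_sq_real, real_inner_smul_right, norm_smul, hu, real_inner_comm, Real.norm_eq_abs,
    mul_one, sq_abs]
  ring

section stdGaussian

variable {E : Type*} [NormedAddCommGroup E] [InnerProductSpace ℝ E] [FiniteDimensional ℝ E]
  [MeasurableSpace E] [BorelSpace E]

lemma stdGaussian_map_inner (u : E) :
    (stdGaussian E).map (fun x ↦ ⟪u, x⟫) = gaussianReal 0 (‖u‖₊ ^ 2) := by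
  have h := IsGaussian.map_eq_gaussianReal (μ := stdGaussian E) (innerSL ℝ u)
  rw [integral_strongDual_stdGaussian, variance_dual_stdGaussian, innerSL_apply_norm,
    ← coe_nnnorm, ← NNReal.coe_pow, Real.toNNReal_coe] at h
  exact h

lemma stdGaussian_map_inner_prod {u w : E} (huw : ⟪u, w⟫ = 0) :
    (stdGaussian E).map (fun x ↦ (⟪u, x⟫, ⟪w, x⟫)) =
      (gaussianReal 0 (‖u‖₊ ^ 2)).prod (gaussianReal 0 (‖w‖₊ ^ 2)) := by
  have hlaw : HasGaussianLaw (fun x ↦ (⟪u, x⟫, ⟪w, x⟫)) (stdGaussian E) :=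
    IsGaussian.hasGaussianLaw_id.map_fun ((innerSL ℝ u).prod (innerSL ℝ w))
  have hcov : cov[fun x ↦ ⟪u, x⟫, fun x ↦ ⟪w, x⟫; stdGaussian E] = 0 := by
    rw [← covarianceBilin_apply_eq_cov IsGaussian.memLp_two_id, covarianceBilin_stdGaussian,
      innerSL_apply_apply, huw]
  rw [(hlaw.indepFun_of_covariance_eq_zero hcov).map_prod_eq_prod_map_map (by fun_prop)
    (by fun_prop), stdGaussian_map_inner, stdGaussian_map_inner]

lemma ae_inner_ne_zero_stdGaussian {u : E} (hu : u ≠ 0) :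
    ∀ᵐ x ∂stdGaussian E, ⟪u, x⟫ ≠ 0 := by
  have h : (stdGaussian E).map (fun x ↦ ⟪u, x⟫) {0} = 0 := by
    have := nullSingletonClass_gaussianReal (μ := 0) (v := ‖u‖₊ ^ 2) (by simpa using hu)
    rw [stdGaussian_map_inner]
    exact measure_singleton 0
  rw [Measure.map_apply (by fun_prop) (measurableSet_singleton 0)] at h
  exact measure_eq_zero_iff_ae_notMem.mp h

lemma integral_sign_inner_mul_sign_inner_smul_stdGaussian {u : E} (hu : u ≠ 0) (c : ℝ) :
    ∫ x, sign ⟪u, x⟫ * sign ⟪c • u, x⟫ ∂stdGaussian E = sign c := by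
  have h : ∀ᵐ x ∂stdGaussian E, sign ⟪u, x⟫ * sign ⟪c • u, x⟫ = sign c := by
    filter_upwards [ae_inner_ne_zero_stdGaussian hu] with x hx
    rw [real_inner_smul_left, sign_mul_sign_mul_of_ne_zero hx]
  rw [integral_congr_ae h, integral_const, probReal_univ, one_smul]

lemma integral_sign_inner_mul_sign_inner_cos_sin_stdGaussian {u w : E} (hu : ‖u‖ = 1)
    (hw : ‖w‖ = 1) (huw : ⟪u, w⟫ = 0) {φ : ℝ} (h0 : 0 ≤ φ) (hπ : φ ≤ π) :
    ∫ x, sign ⟪u, x⟫ * sign ⟪cos φ • u + sin φ • w, x⟫ ∂stdGaussian E = 1 - 2 * φ / π := by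
  have hmap := stdGaussian_map_inner_prod huw
  rw [show ‖u‖₊ = 1 from Subtype.ext hu, show ‖w‖₊ = 1 from Subtype.ext hw, one_pow] at hmap
  have h := integral_sign_mul_sign_gaussianReal_prod h0 hπ
  rw [← hmap, integral_map (by fun_prop) (by fun_prop)] at h
  simpa only [inner_add_left, real_inner_smul_left] using h

theorem integral_sign_inner_mul_sign_inner_stdGaussian {u v : E} (hu : ‖u‖ = 1) (hv : ‖v‖ = 1) :
    ∫ x, sign ⟪u, x⟫ * sign ⟪v, x⟫ ∂stdGaussian E = 2 / π * arcsin ⟪u, v⟫ := by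
  set ρ := ⟪u, v⟫
  obtain ⟨hρ₁, hρ₂⟩ : -1 ≤ ρ ∧ ρ ≤ 1 :=
    abs_le.mp (by simpa [hu, hv] using abs_real_inner_le_norm u v)
  have hd : ‖v - ρ • u‖ ^ 2 = 1 - ρ ^ 2 := by rw [norm_sub_inner_smul_sq hu, hv, one_pow]
  rcases eq_or_ne (ρ ^ 2) 1 with hρ | hρ
  · have hv' : v = ρ • u := by
      rwa [hρ, sub_self, sq_eq_zero_iff, norm_eq_zero, sub_eq_zero] at hd
    have hu0 : u ≠ 0 := norm_ne_zero_iff.mp (by simp [hu])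
    rw [hv', integral_sign_inner_mul_sign_inner_smul_stdGaussian hu0]
    rcases sq_eq_one_iff.mp hρ with h | h <;> simp [h, sign_neg, field]
  · set d := ‖v - ρ • u‖
    have hd0 : d ≠ 0 := fun h ↦ hρ (by rw [h] at hd; linarith)
    set w := d⁻¹ • (v - ρ • u)
    have hw : ‖w‖ = 1 := by rw [norm_smul, norm_inv, norm_norm, inv_mul_cancel₀ hd0]
    have huw : ⟪u, w⟫ = 0 := by
      rw [real_inner_smul_right, inner_sub_right, real_inner_smul_right,
        real_inner_self_eq_norm_sq, hu]
      ring
    have hv' : v = cos (arccos ρ) • u + sin (arccos ρ) • w := by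
      rw [cos_arccos hρ₁ hρ₂, sin_arccos, ← hd, sqrt_sq (norm_nonneg _), smul_inv_smul₀ hd0]
      abel
    rw [hv', integral_sign_inner_mul_sign_inner_cos_sin_stdGaussian hu hw huw (arccos_nonneg ρ)
      (arccos_le_pi ρ), arccos_eq_pi_div_two_sub_arcsin]
    field_simp
    ring

end stdGaussian

/-- Grothendieck's identity: for unit vectors `u, v` and a standard Gaussian
vector `g`, `E[sign⟨g,u⟩ · sign⟨g,v⟩] = (2/π) arcsin⟨u,v⟩`. -/
theorem grothendieck_identity {n : ℕ} (u v : Fin n → ℝ)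
    (hu : Real.sqrt (∑ i, (u i)^2) = 1) (hv : Real.sqrt (∑ i, (v i)^2) = 1) :
    ∫ g, Real.sign (∑ i, g i * u i) * Real.sign (∑ i, g i * v i)
        ∂(stdGaussianPi n) =
      (2 / Real.pi) * Real.arcsin (∑ i, u i * v i) := by
  have h := integral_sign_inner_mul_sign_inner_stdGaussian (u := toLp 2 u) (v := toLp 2 v)
    (by simpa [EuclideanSpace.norm_eq] using hu) (by simpa [EuclideanSpace.norm_eq] using hv)
  rw [← map_pi_eq_stdGaussian, integral_map (by fun_prop) (by fun_prop)] at h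
  simpa [stdGaussianPi, EuclideanSpace.inner_eq_star_dotProduct, dotProduct, mul_comm] using h
end

section
/- Let g : ℝⁿ → ℝ be convex, x ∈ ℝⁿ, and let D(g,x) = ⋃_{t>0} {u : g(x+tu) ≤ g(x)} be the descent cone. Then the polar of the descent cone equals the cone generated by the subdifferential: [D(g,x)]° = ⋃_{t≥0} { t·z : z ∈ ∂g(x) } (assuming ∂g(x) is nonempty and does not contain 0, and taking closures as appropriate). -/
/-!
For convex `g`, the one-sided directional derivative `g'(x; ·)` is finite and sublinear, so by
Hahn–Banach each value `g'(x; v)` is attained as `⟪z, v⟫` by a subgradient `z` (the max formula;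
in particular `∂g(x) ≠ ∅`). Hence any `v` with `⟪z, v⟫ < 0` for all `z ∈ ∂g(x)` is a descent
direction. Separating `0` from `∂g(x)` gives such a `v₀`, and perturbing by `ε • v₀` shows that
every `v` with `⟪z, v⟫ ≤ 0` on `∂g(x)` lies in the closure of the descent cone. So a point of the
polar of the descent cone cannot be separated from the closed cone generated by `∂g(x)`; the
reverse inclusion is the subgradient inequality.
-/

open scoped RealInnerProductSpace

/-- The descent cone of a function `g` at a point `x`. -/
def descentCone {n : ℕ} (g : EuclideanSpace ℝ (Fin n) → ℝ)
    (x : EuclideanSpace ℝ (Fin n)) : Set (EuclideanSpace ℝ (Fin n)) :=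
  ⋃ t ∈ Set.Ioi (0:ℝ), {u | g (x + t • u) ≤ g x}

/-- The convex subdifferential of `g` at `x`. -/
def subdiff {n : ℕ} (g : EuclideanSpace ℝ (Fin n) → ℝ)
    (x : EuclideanSpace ℝ (Fin n)) : Set (EuclideanSpace ℝ (Fin n)) :=
  {z | ∀ y, g y ≥ g x + ⟪z, y - x⟫}

/-- The polar cone of a set. -/
def polarCone {n : ℕ} (K : Set (EuclideanSpace ℝ (Fin n))) :
    Set (EuclideanSpace ℝ (Fin n)) :=
  {z | ∀ v ∈ K, ⟪z, v⟫ ≤ 0}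

open Set Filter Topology

section DirectionalDerivative

variable {E : Type*} [AddCommGroup E] [Module ℝ E]

noncomputable def diffQuot (g : E → ℝ) (x u : E) (t : ℝ) : ℝ :=
  (g (x + t • u) - g x) / t

/-- The one-sided directional derivative `g'(x; u)`. For convex `g` the difference quotients are
monotone in `t`, so this infimum is their limit as `t → 0⁺`. -/
noncomputable def dirDeriv (g : E → ℝ) (x u : E) : ℝ :=
  ⨅ t : Ioi (0 : ℝ), diffQuot g x u t

variable {g : E → ℝ} {x u v : E} {c s t : ℝ}

lemma diffQuot_smul (c : ℝ) : diffQuot g x (c • u) t = c * diffQuot g x u (c * t) := by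
  rcases eq_or_ne c 0 with rfl | hc
  · simp [diffQuot]
  rcases eq_or_ne t 0 with rfl | ht
  · simp [diffQuot]
  rw [diffQuot, diffQuot, smul_smul, mul_comm t c]
  field_simp

lemma le_dirDeriv (h : ∀ t, 0 < t → c ≤ diffQuot g x u t) : c ≤ dirDeriv g x u :=
  le_ciInf fun t => h t t.2

lemma exists_diffQuot_lt_of_dirDeriv_lt (h : dirDeriv g x u < c) :
    ∃ t, 0 < t ∧ diffQuot g x u t < c := by
  obtain ⟨t, ht⟩ := exists_lt_of_ciInf_lt h
  exact ⟨t, t.2, ht⟩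

lemma dirDeriv_zero_right : dirDeriv g x 0 = 0 := by
  simp [dirDeriv, diffQuot]

namespace ConvexOn

variable (hg : ConvexOn ℝ univ g)
include hg

lemma comp_line (x u : E) : ConvexOn ℝ univ fun t : ℝ => g (x + t • u) := by
  have h : ConvexOn ℝ univ (g ∘ AffineMap.lineMap (k := ℝ) x (x + u)) := by
    simpa using hg.comp_affineMap (AffineMap.lineMap (k := ℝ) x (x + u))
  convert h using 1
  ext t
  simp [AffineMap.lineMap_apply, add_comm]

lemma diffQuot_mono (hs : 0 < s) (hst : s ≤ t) : diffQuot g x u s ≤ diffQuot g x u t := by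
  have := (hg.comp_line x u).secant_mono (a := 0) trivial trivial trivial hs.ne'
    (hs.trans_le hst).ne' hst
  simpa [diffQuot] using this

lemma neg_diffQuot_neg_le (hs : 0 < s) (ht : 0 < t) :
    -diffQuot g x (-u) s ≤ diffQuot g x u t := by
  have := (hg.comp_line x u).secant_mono (a := 0) trivial trivial trivial
    (neg_ne_zero.2 hs.ne') ht.ne' (by linarith)
  simp only [zero_smul, add_zero, sub_zero] at this
  rw [diffQuot, diffQuot, smul_neg, ← neg_smul]
  rwa [div_neg] at this

lemma bddBelow_diffQuot (x u : E) : BddBelow (range fun t : Ioi (0 : ℝ) => diffQuot g x u t) :=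
  ⟨-diffQuot g x (-u) 1, by
    rintro _ ⟨t, rfl⟩
    exact hg.neg_diffQuot_neg_le one_pos t.2⟩

lemma dirDeriv_le_diffQuot (ht : 0 < t) : dirDeriv g x u ≤ diffQuot g x u t :=
  ciInf_le (hg.bddBelow_diffQuot x u) ⟨t, ht⟩

lemma dirDeriv_smul (hc : 0 < c) : dirDeriv g x (c • u) = c * dirDeriv g x u := by
  refine le_antisymm ?_ (le_dirDeriv fun t ht => ?_)
  · rw [← div_le_iff₀' hc]
    refine le_dirDeriv fun t ht => ?_
    rw [div_le_iff₀' hc]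
    calc dirDeriv g x (c • u) ≤ diffQuot g x (c • u) (t / c) :=
          hg.dirDeriv_le_diffQuot (by positivity)
      _ = c * diffQuot g x u t := by rw [diffQuot_smul, mul_div_cancel₀ _ hc.ne']
  · rw [diffQuot_smul]
    exact mul_le_mul_of_nonneg_left (hg.dirDeriv_le_diffQuot (by positivity)) hc.le

lemma neg_dirDeriv_neg_le : -dirDeriv g x (-u) ≤ dirDeriv g x u := by
  refine le_dirDeriv fun t ht => neg_le.1 (le_dirDeriv fun s hs => ?_)
  exact neg_le.1 (hg.neg_diffQuot_neg_le hs ht)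

lemma smul_dirDeriv_le (c : ℝ) : c * dirDeriv g x u ≤ dirDeriv g x (c • u) := by
  rcases lt_trichotomy c 0 with hc | rfl | hc
  · have h := hg.dirDeriv_smul (x := x) (u := -u) (neg_pos.2 hc)
    rw [neg_smul_neg] at h
    rw [h]
    nlinarith [hg.neg_dirDeriv_neg_le (x := x) (u := u)]
  · simp [dirDeriv_zero_right]
  · exact (hg.dirDeriv_smul hc).ge

lemma diffQuot_add_le (ht : 0 < t) :
    diffQuot g x (u + v) t ≤ diffQuot g x u (2 * t) + diffQuot g x v (2 * t) := by
  have hmid : x + t • (u + v) =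
      (1 / 2 : ℝ) • (x + (2 * t) • u) + (1 / 2 : ℝ) • (x + (2 * t) • v) := by module
  have h := hg.2 (mem_univ (x + (2 * t) • u)) (mem_univ (x + (2 * t) • v))
    (by norm_num : (0 : ℝ) ≤ 1 / 2) (by norm_num : (0 : ℝ) ≤ 1 / 2) (by norm_num)
  rw [← hmid, smul_eq_mul, smul_eq_mul] at h
  rw [diffQuot, diffQuot, diffQuot, ← add_div, div_le_div_iff₀ ht (by positivity)]
  nlinarith

lemma dirDeriv_add_le : dirDeriv g x (u + v) ≤ dirDeriv g x u + dirDeriv g x v := by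
  have key : ∀ s, 0 < s → ∀ t, 0 < t →
      dirDeriv g x (u + v) ≤ diffQuot g x u s + diffQuot g x v t := by
    intro s hs t ht
    have hr : 0 < min s t / 2 := by positivity
    have h2r : 2 * (min s t / 2) = min s t := by ring
    calc dirDeriv g x (u + v) ≤ diffQuot g x (u + v) (min s t / 2) := hg.dirDeriv_le_diffQuot hr
      _ ≤ diffQuot g x u (min s t) + diffQuot g x v (min s t) := by
          simpa only [h2r] using hg.diffQuot_add_le hr
      _ ≤ diffQuot g x u s + diffQuot g x v t := add_le_add
          (hg.diffQuot_mono (lt_min hs ht) (min_le_left s t))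
          (hg.diffQuot_mono (lt_min hs ht) (min_le_right s t))
  rw [← sub_le_iff_le_add']
  refine le_dirDeriv fun t ht => sub_le_iff_le_add'.2 ?_
  rw [← sub_le_iff_le_add]
  exact le_dirDeriv fun s hs => sub_le_iff_le_add.2 (key s hs t ht)

theorem exists_linearMap_le_sub_and_eq_dirDeriv (x v : E) :
    ∃ F : E →ₗ[ℝ] ℝ, (∀ y, F (y - x) ≤ g y - g x) ∧ F v = dirDeriv g x v := by
  let f : E →ₗ.[ℝ] ℝ := LinearPMap.mkSpanSingleton' v (dirDeriv g x v) fun c hcv => by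
    rcases eq_or_ne c 0 with rfl | hc
    · simp
    · simp [(smul_eq_zero.1 hcv).resolve_left hc, dirDeriv_zero_right]
  obtain ⟨F, hFf, hFle⟩ := exists_extension_of_le_sublinear f (dirDeriv g x)
    (fun _ hc _ => hg.dirDeriv_smul hc) (fun _ _ => hg.dirDeriv_add_le) (by
      rintro ⟨_, hw⟩
      obtain ⟨c, rfl⟩ := Submodule.mem_span_singleton.1 hw
      rw [LinearPMap.mkSpanSingleton'_apply]
      exact hg.smul_dirDeriv_le c)
  refine ⟨F, fun y => ?_, ?_⟩
  · calc F (y - x) ≤ dirDeriv g x (y - x) := hFle _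
      _ ≤ diffQuot g x (y - x) 1 := hg.dirDeriv_le_diffQuot one_pos
      _ = g y - g x := by simp [diffQuot]
  · exact (hFf ⟨v, Submodule.mem_span_singleton_self v⟩).trans
      (LinearPMap.mkSpanSingleton'_apply_self _ _ _ _)

end ConvexOn
end DirectionalDerivative

section ConeSeparation

variable {F : Type*} [NormedAddCommGroup F] [InnerProductSpace ℝ F] {s : Set F} {w : F}

lemma Convex.convex_setOf_nonneg_smul (hs : Convex ℝ s) :
    Convex ℝ {w | ∃ t : ℝ, 0 ≤ t ∧ ∃ z ∈ s, w = t • z} := by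
  rintro _ ⟨t₁, ht₁, z₁, hz₁, rfl⟩ _ ⟨t₂, ht₂, z₂, hz₂, rfl⟩ a b ha hb hab
  have h₁ : 0 ≤ a * t₁ := mul_nonneg ha ht₁
  have h₂ : 0 ≤ b * t₂ := mul_nonneg hb ht₂
  rcases (add_nonneg h₁ h₂).eq_or_lt with hs0 | hs0
  · refine ⟨0, le_rfl, z₁, hz₁, ?_⟩
    obtain ⟨h₁0, h₂0⟩ := (add_eq_zero_iff_of_nonneg h₁ h₂).1 hs0.symm
    rw [smul_smul, smul_smul, h₁0, h₂0]
    simp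
  · refine ⟨a * t₁ + b * t₂, hs0.le, (a * t₁ / (a * t₁ + b * t₂)) • z₁ +
      (b * t₂ / (a * t₁ + b * t₂)) • z₂, hs hz₁ hz₂ (by positivity) (by positivity) ?_, ?_⟩
    · rw [← add_div, div_self hs0.ne']
    · rw [smul_add, smul_smul, smul_smul, smul_smul, smul_smul, mul_div_cancel₀ _ hs0.ne',
        mul_div_cancel₀ _ hs0.ne']

variable [CompleteSpace F]

lemma exists_forall_inner_neg_of_zero_notMem (hs : Convex ℝ s) (hsc : IsClosed s)
    (h0 : (0 : F) ∉ s) : ∃ v, ∀ z ∈ s, ⟪z, v⟫ < 0 := by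
  obtain ⟨f, u, hf, hu⟩ := geometric_hahn_banach_closed_point hs hsc h0
  refine ⟨(InnerProductSpace.toDual ℝ F).symm f, fun z hz => ?_⟩
  rw [real_inner_comm, InnerProductSpace.toDual_symm_apply, ← map_zero f]
  exact (hf z hz).trans hu

lemma exists_inner_pos_of_notMem_closure_cone (hs : Convex ℝ s) (hne : s.Nonempty)
    (hw : w ∉ closure {w | ∃ t : ℝ, 0 ≤ t ∧ ∃ z ∈ s, w = t • z}) :
    ∃ v, (∀ z ∈ s, ⟪z, v⟫ ≤ 0) ∧ 0 < ⟪w, v⟫ := by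
  obtain ⟨f, u, hf, hu⟩ :=
    geometric_hahn_banach_closed_point hs.convex_setOf_nonneg_smul.closure isClosed_closure hw
  have hcone : ∀ t, 0 ≤ t → ∀ z ∈ s, t * f z < u := fun t ht z hz => by
    simpa using hf _ (subset_closure ⟨t, ht, z, hz, rfl⟩)
  obtain ⟨z₀, hz₀⟩ := hne
  have hu0 : 0 < u := by simpa using hcone 0 le_rfl z₀ hz₀
  refine ⟨(InnerProductSpace.toDual ℝ F).symm f, fun z hz => ?_, ?_⟩
  · rw [real_inner_comm, InnerProductSpace.toDual_symm_apply]
    by_contra! hpos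
    have := hcone (u / f z) (by positivity) z hz
    rw [div_mul_cancel₀ _ hpos.ne'] at this
    exact this.false
  · rw [real_inner_comm, InnerProductSpace.toDual_symm_apply]
    exact hu0.trans hu

end ConeSeparation

section Euclidean

variable {n : ℕ} {g : EuclideanSpace ℝ (Fin n) → ℝ} {x v z w : EuclideanSpace ℝ (Fin n)}
  {K : Set (EuclideanSpace ℝ (Fin n))}

lemma isClosed_polarCone (K : Set (EuclideanSpace ℝ (Fin n))) :
    IsClosed (polarCone K) := by
  simp only [polarCone, ofPred_forall]
  exact isClosed_iInter fun v => isClosed_iInter fun _ =>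
    isClosed_le (continuous_id.inner continuous_const) continuous_const

lemma inner_nonpos_of_mem_polarCone_of_mem_closure (hw : w ∈ polarCone K)
    (hv : v ∈ closure K) : ⟪w, v⟫ ≤ 0 :=
  closure_minimal (t := {v | ⟪w, v⟫ ≤ 0}) hw
    (isClosed_le (continuous_const.inner continuous_id) continuous_const) hv

lemma isClosed_subdiff (g : EuclideanSpace ℝ (Fin n) → ℝ) (x : EuclideanSpace ℝ (Fin n)) :
    IsClosed (subdiff g x) := by
  simp only [subdiff, ofPred_forall]
  exact isClosed_iInter fun y =>
    isClosed_le (continuous_const.add (continuous_id.inner continuous_const)) continuous_const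

lemma convex_subdiff (g : EuclideanSpace ℝ (Fin n) → ℝ) (x : EuclideanSpace ℝ (Fin n)) :
    Convex ℝ (subdiff g x) := by
  intro z₁ hz₁ z₂ hz₂ a b ha hb hab y
  have h₁ := mul_le_mul_of_nonneg_left (hz₁ y) ha
  have h₂ := mul_le_mul_of_nonneg_left (hz₂ y) hb
  rw [inner_add_left, real_inner_smul_left, real_inner_smul_left]
  linear_combination h₁ + h₂ + (g y - g x) * hab

lemma inner_nonpos_of_mem_subdiff_of_mem_descentCone (hz : z ∈ subdiff g x)
    (hv : v ∈ descentCone g x) : ⟪z, v⟫ ≤ 0 := by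
  obtain ⟨t, ht, hle⟩ := mem_iUnion₂.1 hv
  have h := hz (x + t • v)
  rw [add_sub_cancel_left, real_inner_smul_right] at h
  exact nonpos_of_mul_nonpos_right (by linarith [hle.out]) ht

namespace ConvexOn

variable (hg : ConvexOn ℝ univ g)
include hg

theorem exists_mem_subdiff_inner_eq_dirDeriv (x v : EuclideanSpace ℝ (Fin n)) :
    ∃ z ∈ subdiff g x, ⟪z, v⟫ = dirDeriv g x v := by
  obtain ⟨F, hF, hFv⟩ := hg.exists_linearMap_le_sub_and_eq_dirDeriv x v
  set z := (InnerProductSpace.toDual ℝ _).symm (LinearMap.toContinuousLinearMap F)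
  have hz : ∀ y, ⟪z, y⟫ = F y := fun y => by simp [z, InnerProductSpace.toDual_symm_apply]
  exact ⟨z, fun y => by linarith [hF y, hz (y - x)], by rw [hz, hFv]⟩

lemma subdiff_nonempty (x : EuclideanSpace ℝ (Fin n)) : (subdiff g x).Nonempty :=
  let ⟨z, hz, _⟩ := hg.exists_mem_subdiff_inner_eq_dirDeriv x 0
  ⟨z, hz⟩

lemma mem_descentCone_of_forall_inner_neg (hv : ∀ z ∈ subdiff g x, ⟪z, v⟫ < 0) :
    v ∈ descentCone g x := by
  obtain ⟨z, hz, hzv⟩ := hg.exists_mem_subdiff_inner_eq_dirDeriv x v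
  obtain ⟨t, ht, hq⟩ := exists_diffQuot_lt_of_dirDeriv_lt (hzv ▸ hv z hz)
  rw [diffQuot, div_lt_iff₀ ht, zero_mul, sub_neg] at hq
  exact mem_iUnion₂.2 ⟨t, ht, hq.le⟩

lemma mem_closure_descentCone (h0 : (0 : EuclideanSpace ℝ (Fin n)) ∉ subdiff g x)
    (hv : ∀ z ∈ subdiff g x, ⟪z, v⟫ ≤ 0) : v ∈ closure (descentCone g x) := by
  obtain ⟨v₀, hv₀⟩ :=
    exists_forall_inner_neg_of_zero_notMem (convex_subdiff g x) (isClosed_subdiff g x) h0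
  have hlim : Tendsto (fun ε : ℝ => v + ε • v₀) (𝓝[>] 0) (𝓝 v) := by
    have : Continuous fun ε : ℝ => v + ε • v₀ := by fun_prop
    simpa using (this.tendsto 0).mono_left nhdsWithin_le_nhds
  refine mem_closure_of_tendsto hlim (eventually_nhdsWithin_of_forall fun ε hε =>
    hg.mem_descentCone_of_forall_inner_neg fun z hz => ?_)
  rw [inner_add_right, real_inner_smul_right]
  exact add_neg_of_nonpos_of_neg (hv z hz) (mul_neg_of_pos_of_neg hε (hv₀ z hz))

end ConvexOn
end Euclidean

theorem polar_descentCone_eq_cone_subdiff_general {n : ℕ}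
    (g : EuclideanSpace ℝ (Fin n) → ℝ) (hg : ConvexOn ℝ Set.univ g)
    (x : EuclideanSpace ℝ (Fin n))
    (h0 : (0 : EuclideanSpace ℝ (Fin n)) ∉ subdiff g x) :
    polarCone (descentCone g x) =
      closure {w | ∃ t : ℝ, 0 ≤ t ∧ ∃ z ∈ subdiff g x, w = t • z} := by
  refine subset_antisymm (fun w hw => ?_) (closure_minimal ?_ (isClosed_polarCone _))
  · by_contra hwK
    obtain ⟨v, hv, hwv⟩ :=
      exists_inner_pos_of_notMem_closure_cone (convex_subdiff g x) (hg.subdiff_nonempty x) hwK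
    exact hwv.not_ge
      (inner_nonpos_of_mem_polarCone_of_mem_closure hw (hg.mem_closure_descentCone h0 hv))
  · rintro _ ⟨t, ht, z, hz, rfl⟩ v hv
    rw [real_inner_smul_left]
    exact mul_nonpos_of_nonneg_of_nonpos ht (inner_nonpos_of_mem_subdiff_of_mem_descentCone hz hv)

/-- The polar of the descent cone is the (closed) cone generated by the
subdifferential: `[D(g,x)]° = cl ⋃_{t ≥ 0} t ∂g(x)`. -/
theorem polar_descentCone_eq_cone_subdiff {n : ℕ}
    (g : EuclideanSpace ℝ (Fin n) → ℝ) (hg : ConvexOn ℝ Set.univ g)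
    (x : EuclideanSpace ℝ (Fin n))
    (hne : (subdiff g x).Nonempty) (h0 : (0 : EuclideanSpace ℝ (Fin n)) ∉ subdiff g x) :
    polarCone (descentCone g x) =
      closure {w | ∃ t : ℝ, 0 ≤ t ∧ ∃ z ∈ subdiff g x, w = t • z} :=
  polar_descentCone_eq_cone_subdiff_general g hg x h0
end

section
/- (Fejér monotonicity of PGM-ISTA) Let f(x) = ½‖y − Ax‖₂², g₁(x) = λ₁‖x‖₁, g₂(x) = λ₂‖Dx‖₁ with A ∈ ℝ^{m×n}, m < n. Fix u ∈ (0, 2/‖A‖₂²) and t ∈ (0, u]. Define the iteration x^{k+1} = prox_{t g₂}( x^k − t·G(x^k) ) where G(x) = (1/u)(x − prox_{u g₁}(x − u∇f(x))). If x* is any fixed point of this iteration map, then for every k, ‖x^{k+1} − x*‖₂ ≤ ‖x^k − x*‖₂. -/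
/-!
Write `x ↦ x - t G(x)` as `F(x) = (1 - t/u) x + (t/u) S(x - u Aᵀ(Ax - y))` with `S` the soft
threshold. `S` is 1-Lipschitz coordinatewise, and `‖v - u AᵀA v‖² = ‖v‖² - 2u‖Av‖² + u²‖AᵀAv‖²
≤ ‖v‖²` once `u‖A‖² ≤ 2`, so `F`, a convex combination of the identity and a composition of
nonexpansive maps, is nonexpansive. The prox map `P` of the convex function `g = t λ₂ ‖D·‖₁` is
nonexpansive: adding its optimality inequalities `⟪z - P z, q - P z⟫ ≤ g q - g (P z)` at two
points gives `‖P z - P z'‖² ≤ ⟪z - z', P z - P z'⟫`. Since `x^{k+1} = P(F x^k)` and `x* = P(F x*)`, the distance to `x*` cannot grow.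
-/

noncomputable def l2 {ι : Type*} [Fintype ι] (x : ι → ℝ) : ℝ :=
  Real.sqrt (∑ i, (x i)^2)

noncomputable def l1 {ι : Type*} [Fintype ι] (x : ι → ℝ) : ℝ :=
  ∑ i, |x i|

/-- Componentwise soft-threshold operator (the prox of the ℓ¹-norm). -/
noncomputable def soft {ι : Type*} [Fintype ι] (lam : ℝ) (x : ι → ℝ) : ι → ℝ :=
  fun i => Real.sign (x i) * max 0 (|x i| - lam)

/-- The finite difference matrix `D ∈ ℝ^{n×(n+1)}` with `(Dx)_i = x_{i+1} - x_i`. -/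
def Dmat (n : ℕ) : Matrix (Fin n) (Fin (n+1)) ℝ :=
  Matrix.of fun i j => if j = i.succ then 1 else if j = i.castSucc then (-1) else 0

/-- The spectral (ℓ²-operator) norm of a matrix. -/
noncomputable def spec {m n : ℕ} (A : Matrix (Fin m) (Fin n) ℝ) : ℝ :=
  ‖(Matrix.toEuclideanLin A).toContinuousLinearMap‖

open Set Filter Topology ContinuousLinearMap
open scoped RealInnerProductSpace Matrix

section Prox

variable {E : Type*} [NormedAddCommGroup E] [InnerProductSpace ℝ E] {h : E → ℝ}

theorem inner_sub_le_of_isProx (hh : ConvexOn ℝ univ h) {z p : E}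
    (hp : ∀ w, h p + 1 / 2 * ‖p - z‖ ^ 2 ≤ h w + 1 / 2 * ‖w - z‖ ^ 2) (q : E) :
    ⟪z - p, q - p⟫ ≤ h q - h p := by
  -- compare `p` with the points `(1 - s) • p + s • q` and let `s → 0⁺`
  have hsmall : ∀ s ∈ Ioc (0 : ℝ) 1, ⟪z - p, q - p⟫ - (h q - h p) ≤ s * (‖q - p‖ ^ 2 / 2) := by
    rintro s ⟨hs0, hs1⟩
    have hconv := hh.2 (mem_univ p) (mem_univ q) (by linarith : 0 ≤ 1 - s) hs0.le (by ring)
    have hmin := hp ((1 - s) • p + s • q)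
    have hexpand : ‖(1 - s) • p + s • q - z‖ ^ 2
        = ‖p - z‖ ^ 2 - 2 * s * ⟪z - p, q - p⟫ + s ^ 2 * ‖q - p‖ ^ 2 := by
      rw [show (1 - s) • p + s • q - z = -(z - p) + s • (q - p) by module, norm_add_sq_real,
        norm_neg, norm_sub_rev z p, inner_neg_left, real_inner_smul_right, norm_smul,
        Real.norm_of_nonneg hs0.le]
      ring
    simp only [smul_eq_mul] at hconv
    rw [hexpand] at hmin
    nlinarith
  have hlim : Tendsto (fun s : ℝ => s * (‖q - p‖ ^ 2 / 2)) (𝓝[>] 0) (𝓝 0) := by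
    simpa using ((tendsto_id (x := 𝓝 (0 : ℝ))).mul_const (‖q - p‖ ^ 2 / 2)).mono_left
      nhdsWithin_le_nhds
  have := ge_of_tendsto hlim (eventually_of_mem (Ioc_mem_nhdsGT one_pos) hsmall)
  linarith

theorem norm_sub_le_of_isProx (hh : ConvexOn ℝ univ h) {z z' p p' : E}
    (hp : ∀ w, h p + 1 / 2 * ‖p - z‖ ^ 2 ≤ h w + 1 / 2 * ‖w - z‖ ^ 2)
    (hp' : ∀ w, h p' + 1 / 2 * ‖p' - z'‖ ^ 2 ≤ h w + 1 / 2 * ‖w - z'‖ ^ 2) :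
    ‖p - p'‖ ≤ ‖z - z'‖ := by
  have hvi := inner_sub_le_of_isProx hh hp p'
  have hvi' := inner_sub_le_of_isProx hh hp' p
  have hfirm : ‖p - p'‖ ^ 2 ≤ ⟪z - z', p - p'⟫ := by
    have : ⟪z - z', p - p'⟫ - ‖p - p'‖ ^ 2 = -⟪z - p, p' - p⟫ - ⟪z' - p', p - p'⟫ := by
      rw [← real_inner_self_eq_norm_sq]
      simp only [inner_sub_left, inner_sub_right, real_inner_comm]
      ring
    linarith
  have hcs := real_inner_le_norm (z - z') (p - p')
  nlinarith [norm_nonneg (p - p'), norm_nonneg (z - z')]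

end Prox

theorem norm_sub_smul_adjoint_apply_le {E F : Type*} [NormedAddCommGroup E]
    [InnerProductSpace ℝ E] [CompleteSpace E] [NormedAddCommGroup F] [InnerProductSpace ℝ F]
    [CompleteSpace F] (T : E →L[ℝ] F) {u : ℝ} (hu0 : 0 ≤ u) (hu : u * ‖T‖ ^ 2 ≤ 2) (v : E) :
    ‖v - u • adjoint T (T v)‖ ≤ ‖v‖ := by
  have hinner : ⟪v, adjoint T (T v)⟫ = ‖T v‖ ^ 2 := by
    rw [adjoint_inner_right, real_inner_self_eq_norm_sq]
  have hbound : ‖adjoint T (T v)‖ ≤ ‖T‖ * ‖T v‖ := by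
    simpa only [LinearIsometryEquiv.norm_map] using (adjoint T).le_opNorm (T v)
  have hsq : u * ‖adjoint T (T v)‖ ^ 2 ≤ 2 * ‖T v‖ ^ 2 :=
    calc u * ‖adjoint T (T v)‖ ^ 2 ≤ u * (‖T‖ * ‖T v‖) ^ 2 := by gcongr
      _ = u * ‖T‖ ^ 2 * ‖T v‖ ^ 2 := by ring
      _ ≤ 2 * ‖T v‖ ^ 2 := by gcongr
  refine (sq_le_sq₀ (norm_nonneg _) (norm_nonneg _)).mp ?_
  rw [norm_sub_sq_real, real_inner_smul_right, hinner, norm_smul, Real.norm_of_nonneg hu0]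
  nlinarith

section Euclidean

variable {ι : Type*} [Fintype ι]

theorem l2_eq_norm_toLp (x : ι → ℝ) : l2 x = ‖WithLp.toLp 2 x‖ := by
  simp [l2, EuclideanSpace.norm_eq]

theorem l1_eq_norm_toLp (x : ι → ℝ) : l1 x = ‖WithLp.toLp 1 x‖ := by
  simp [l1, PiLp.norm_eq_of_L1]

theorem convexOn_l1 : ConvexOn ℝ univ (l1 : (ι → ℝ) → ℝ) := by
  have := (convexOn_univ_norm (E := PiLp 1 fun _ : ι => ℝ)).comp_linearMap
    (WithLp.linearEquiv 1 ℝ (ι → ℝ)).symm.toLinearMap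
  simpa [Function.comp_def, ← l1_eq_norm_toLp] using this

theorem l2_le_l2_of_abs_le {x x' : ι → ℝ} (h : ∀ i, |x i| ≤ |x' i|) : l2 x ≤ l2 x' :=
  Real.sqrt_le_sqrt <| Finset.sum_le_sum fun i _ => sq_le_sq.mpr (h i)

def L2Nonexpansive (f : (ι → ℝ) → ι → ℝ) : Prop :=
  ∀ a b, l2 (f a - f b) ≤ l2 (a - b)

theorem L2Nonexpansive.comp {f g : (ι → ℝ) → ι → ℝ} (hf : L2Nonexpansive f)
    (hg : L2Nonexpansive g) : L2Nonexpansive (f ∘ g) :=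
  fun a b => (hf (g a) (g b)).trans (hg a b)

theorem L2Nonexpansive.averaged {f : (ι → ℝ) → ι → ℝ} (hf : L2Nonexpansive f) {θ : ℝ}
    (hθ0 : 0 ≤ θ) (hθ1 : θ ≤ 1) : L2Nonexpansive fun x => (1 - θ) • x + θ • f x := by
  intro a b
  calc l2 (((1 - θ) • a + θ • f a) - ((1 - θ) • b + θ • f b))
      = l2 ((1 - θ) • (a - b) + θ • (f a - f b)) := by congr 1; module
    _ ≤ (1 - θ) * l2 (a - b) + θ * l2 (f a - f b) := by
      simp only [l2_eq_norm_toLp, WithLp.toLp_add, WithLp.toLp_smul]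
      refine (norm_add_le _ _).trans_eq ?_
      rw [norm_smul, norm_smul, Real.norm_of_nonneg (sub_nonneg.mpr hθ1),
        Real.norm_of_nonneg hθ0]
    _ ≤ l2 (a - b) := by nlinarith [hf a b]

theorem l2Nonexpansive_of_isProx {h : (ι → ℝ) → ℝ} (hh : ConvexOn ℝ univ h)
    {p : (ι → ℝ) → ι → ℝ}
    (hp : ∀ z w, h (p z) + 1 / 2 * l2 (p z - z) ^ 2 ≤ h w + 1 / 2 * l2 (w - z) ^ 2) :
    L2Nonexpansive p := by
  intro z z'
  have hh' := hh.comp_linearMap (WithLp.linearEquiv 2 ℝ (ι → ℝ)).toLinearMap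
  simp only [l2_eq_norm_toLp, WithLp.toLp_sub] at hp ⊢
  exact norm_sub_le_of_isProx (h := h ∘ WithLp.ofLp) hh' (fun w => hp z w.ofLp)
    (fun w => hp z' w.ofLp)

theorem soft_apply_eq_max_min {c : ℝ} (hc : 0 ≤ c) (x : ι → ℝ) (i : ι) :
    soft c x i = max (x i - c) (min (x i + c) 0) := by
  rcases lt_trichotomy (x i) 0 with hx | hx | hx
  · simp only [soft, Real.sign_of_neg hx, abs_of_neg hx]
    rcases le_total (x i + c) 0 with h | h
    · rw [max_eq_right (by linarith), min_eq_left h, max_eq_right (by linarith)]; ring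
    · rw [max_eq_left (by linarith), min_eq_right h, max_eq_right (by linarith)]; ring
  · simp [soft, hx, hc]
  · simp only [soft, Real.sign_of_pos hx, abs_of_pos hx]
    rcases le_total (x i) c with h | h
    · rw [max_eq_left (by linarith), min_eq_right (by linarith), max_eq_right (by linarith)]; ring
    · rw [max_eq_right (by linarith), min_eq_right (by linarith), max_eq_left (by linarith)]; ring

theorem l2Nonexpansive_soft {c : ℝ} (hc : 0 ≤ c) : L2Nonexpansive (soft (ι := ι) c) := by
  have hlip : LipschitzWith 1 fun s : ℝ => max (s - c) (min (s + c) 0) := by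
    simpa using (IsometryEquiv.subRight c).isometry.lipschitz.max
      ((IsometryEquiv.addRight c).isometry.lipschitz.min_const 0)
  refine fun a b => l2_le_l2_of_abs_le fun i => ?_
  simpa [soft_apply_eq_max_min hc, ← Real.dist_eq] using hlip.dist_le_mul (a i) (b i)

end Euclidean

theorem toLp_transpose_mulVec {m n : Type*} [Fintype m] [Fintype n] [DecidableEq m]
    [DecidableEq n] (A : Matrix m n ℝ) (w : m → ℝ) :
    WithLp.toLp 2 (Aᵀ *ᵥ w)
      = adjoint (Matrix.toEuclideanLin A).toContinuousLinearMap (WithLp.toLp 2 w) := by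
  rw [← LinearMap.adjoint_toContinuousLinearMap, ← Matrix.toEuclideanLin_conjTranspose_eq_adjoint]
  simp

theorem l2Nonexpansive_gradientStep {m n : ℕ} (A : Matrix (Fin m) (Fin n) ℝ) (y : Fin m → ℝ)
    {u : ℝ} (hu0 : 0 ≤ u) (hu : u * spec A ^ 2 ≤ 2) :
    L2Nonexpansive fun x => x - u • Aᵀ *ᵥ (A *ᵥ x - y) := by
  intro a b
  have hlin : (a - u • Aᵀ *ᵥ (A *ᵥ a - y)) - (b - u • Aᵀ *ᵥ (A *ᵥ b - y))
      = (a - b) - u • Aᵀ *ᵥ (A *ᵥ (a - b)) := by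
    simp only [Matrix.mulVec_sub]
    module
  rw [hlin, l2_eq_norm_toLp, l2_eq_norm_toLp, WithLp.toLp_sub, WithLp.toLp_smul,
    toLp_transpose_mulVec]
  exact norm_sub_smul_adjoint_apply_le _ hu0 hu _

theorem pgm_ista_fejer_monotone_general {m n : ℕ} (A : Matrix (Fin m) (Fin (n+1)) ℝ)
    (y : Fin m → ℝ) (lam1 lam2 : ℝ)
    (h1 : 0 ≤ lam1) (h2 : 0 ≤ lam2)
    (u t : ℝ) (hu0 : 0 < u) (hu2 : u < 2 / (spec A)^2) (ht0 : 0 < t) (htu : t ≤ u)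
    (p2 : (Fin (n+1) → ℝ) → (Fin (n+1) → ℝ))
    (hp2 : ∀ z w : Fin (n+1) → ℝ,
      t * (lam2 * l1 ((Dmat n).mulVec (p2 z))) + (1/2) * (l2 (p2 z - z))^2 ≤
        t * (lam2 * l1 ((Dmat n).mulVec w)) + (1/2) * (l2 (w - z))^2)
    (G : (Fin (n+1) → ℝ) → (Fin (n+1) → ℝ))
    (hG : ∀ z, G z = (1/u) •
      (z - soft (lam1 * u) (z - u • (A.transpose.mulVec (A.mulVec z - y)))))
    (xs : ℕ → (Fin (n+1) → ℝ))
    (hxs : ∀ k, xs (k+1) = p2 (xs k - t • G (xs k)))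
    (xstar : Fin (n+1) → ℝ)
    (hfix : p2 (xstar - t • G xstar) = xstar) :
    ∀ k, l2 (xs (k+1) - xstar) ≤ l2 (xs k - xstar) := by
  have hu : u * spec A ^ 2 ≤ 2 := by
    rcases (sq_nonneg (spec A)).eq_or_lt with h0 | hpos
    · rw [← h0]; linarith
    · exact ((lt_div_iff₀ hpos).mp hu2).le
  have hforward : (fun x => x - t • G x) = fun x => (1 - t / u) • x +
      (t / u) • soft (lam1 * u) (x - u • Aᵀ *ᵥ (A *ᵥ x - y)) := by
    funext x
    rw [hG, smul_smul, mul_one_div, sub_smul, one_smul, smul_sub]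
    abel
  have hF : L2Nonexpansive fun x => x - t • G x := by
    rw [hforward]
    exact ((l2Nonexpansive_soft (mul_nonneg h1 hu0.le)).comp
      (l2Nonexpansive_gradientStep A y hu0.le hu)).averaged (by positivity)
      ((div_le_one hu0).mpr htu)
  have hP : L2Nonexpansive p2 :=
    l2Nonexpansive_of_isProx (((convexOn_l1.comp_linearMap (Dmat n).mulVecLin).smul h2).smul
      ht0.le) hp2
  intro k
  calc l2 (xs (k + 1) - xstar)
      = l2 (p2 (xs k - t • G (xs k)) - p2 (xstar - t • G xstar)) := by rw [hxs, hfix]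
    _ ≤ l2 (xs k - xstar) := (hP _ _).trans (hF _ _)

/-- Fejér monotonicity of PGM-ISTA: if `x*` is a fixed point of the iteration
`x ↦ prox_{t g₂}(x - t G(x))`, with
`G(x) = (1/u)(x - prox_{u g₁}(x - u ∇f(x)))`, `g₁ = λ₁‖·‖₁`, `g₂ = λ₂‖D·‖₁`,
`f = ½‖y - A·‖₂²`, `u ∈ (0, 2/‖A‖₂²)`, `t ∈ (0, u]`, then the iterates satisfy
`‖x^{k+1} - x*‖₂ ≤ ‖x^k - x*‖₂`. -/
theorem pgm_ista_fejer_monotone {m n : ℕ} (A : Matrix (Fin m) (Fin (n+1)) ℝ)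
    (hmn : m < n + 1) (y : Fin m → ℝ) (lam1 lam2 : ℝ)
    (h1 : 0 ≤ lam1) (h2 : 0 ≤ lam2)
    (u t : ℝ) (hu0 : 0 < u) (hu2 : u < 2 / (spec A)^2) (ht0 : 0 < t) (htu : t ≤ u)
    (p2 : (Fin (n+1) → ℝ) → (Fin (n+1) → ℝ))
    (hp2 : ∀ z w : Fin (n+1) → ℝ,
      t * (lam2 * l1 ((Dmat n).mulVec (p2 z))) + (1/2) * (l2 (p2 z - z))^2 ≤
        t * (lam2 * l1 ((Dmat n).mulVec w)) + (1/2) * (l2 (w - z))^2)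
    (G : (Fin (n+1) → ℝ) → (Fin (n+1) → ℝ))
    (hG : ∀ z, G z = (1/u) •
      (z - soft (lam1 * u) (z - u • (A.transpose.mulVec (A.mulVec z - y)))))
    (xs : ℕ → (Fin (n+1) → ℝ))
    (hxs : ∀ k, xs (k+1) = p2 (xs k - t • G (xs k)))
    (xstar : Fin (n+1) → ℝ)
    (hfix : p2 (xstar - t • G xstar) = xstar) :
    ∀ k, l2 (xs (k+1) - xstar) ≤ l2 (xs k - xstar) :=
  pgm_ista_fejer_monotone_general A y lam1 lam2 h1 h2 u t hu0 hu2 ht0 htu p2 hp2 G hG xs hxs xstar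
    hfix
end

section
/- Let f(x) = ½‖y − Ax‖₂² with ∇f(x) = Aᵀ(Ax − y), and g₁(x) = λ₁‖x‖₁. For u > 0, define the gradient mapping G_u(x) = (1/u)(x − prox_{u g₁}(x − u∇f(x))). Let x ∈ ℝⁿ and suppose 1/u ≥ (sign(x_i)λ₁ + Σ_j a_iᵀa_j x_j − a_iᵀy)/x_i for every i with x_i ≠ 0. Then G_u(x) ∈ ∂F₁(x), where F₁ = f + g₁. -/
lemma soft_of_ge (w a : ℝ) (ha : 0 ≤ a) (h : a ≤ w) :
    Real.sign w * max 0 (|w| - a) = w - a := by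
  rcases eq_or_lt_of_le (ha.trans h) with h0 | h0
  · have ha0 : a = 0 := le_antisymm (h.trans h0.symm.le) ha
    simp [← h0, ha0]
  · rw [Real.sign_of_pos h0, abs_of_pos h0, max_eq_right (by linarith), one_mul]

lemma soft_of_le (w a : ℝ) (ha : 0 ≤ a) (h : w ≤ -a) :
    Real.sign w * max 0 (|w| - a) = w + a := by
  have h' := soft_of_ge (-w) a ha (by linarith)
  rw [Real.sign_neg, abs_neg] at h'
  linear_combination -h'

lemma soft_abs_sub (w a : ℝ) (ha : 0 ≤ a) :
    |Real.sign w * max 0 (|w| - a) - w| ≤ a := by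
  rcases le_or_gt (|w|) a with h | h
  · rw [max_eq_left (by linarith), mul_zero, zero_sub, abs_neg]
    exact h
  · rcases le_or_gt 0 w with hw | hw
    · have : a ≤ w := by rw [abs_of_nonneg hw] at h; linarith
      rw [soft_of_ge w a ha this, show w - a - w = -a by ring, abs_neg, abs_of_nonneg ha]
    · have : w ≤ -a := by rw [abs_of_neg hw] at h; linarith
      rw [soft_of_le w a ha this, show w + a - w = a by ring, abs_of_nonneg ha]

lemma key_component (lam1 u c t : ℝ) (h1 : 0 ≤ lam1) (hu : 0 < u)
    (hstep : t ≠ 0 → 1 / u ≥ (Real.sign t * lam1 + c) / t) :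
    (1/u * (t - Real.sign (t - u*c) * max 0 (|t - u*c| - lam1*u)) - c) * t = lam1 * |t| ∧
    |1/u * (t - Real.sign (t - u*c) * max 0 (|t - u*c| - lam1*u)) - c| ≤ lam1 := by
  have hu' : u ≠ 0 := ne_of_gt hu
  have ha : 0 ≤ lam1 * u := by positivity
  rcases lt_trichotomy t 0 with ht | ht | ht
  · have hs := hstep (ne_of_lt ht)
    rw [Real.sign_of_neg ht] at hs
    have h2 := (div_le_iff_of_neg ht).mp hs
    have hw : t - u*c ≤ -(lam1*u) := by
      have h3 : (1/u)*t*u ≤ (-1*lam1 + c)*u := mul_le_mul_of_nonneg_right h2 hu.le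
      have h4 : (1/u)*t*u = t := by field_simp
      nlinarith
    rw [soft_of_le _ _ ha hw]
    have hv : 1/u * (t - (t - u*c + lam1*u)) - c = -lam1 := by field_simp; ring
    rw [hv]
    constructor
    · rw [abs_of_neg ht]; ring
    · rw [abs_neg, abs_of_nonneg h1]
  · subst ht
    constructor
    · simp
    · have hS := soft_abs_sub (0 - u*c) (lam1*u) ha
      have heq : 1/u * (0 - Real.sign (0 - u*c) * max 0 (|0 - u*c| - lam1*u)) - c
          = -((1/u) * (Real.sign (0 - u*c) * max 0 (|0 - u*c| - lam1*u) - (0 - u*c))) := by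
        field_simp
        ring
      rw [heq, abs_neg, abs_mul, abs_of_pos (by positivity : (0:ℝ) < 1/u)]
      calc (1/u) * |Real.sign (0 - u*c) * max 0 (|0 - u*c| - lam1*u) - (0 - u*c)|
          ≤ (1/u) * (lam1*u) := by
            exact mul_le_mul_of_nonneg_left hS (by positivity)
        _ = lam1 := by field_simp
  · have hs := hstep (ne_of_gt ht)
    rw [Real.sign_of_pos ht] at hs
    have h2 := (div_le_div_iff₀ ht hu).mp hs
    have hw : lam1*u ≤ t - u*c := by nlinarith
    rw [soft_of_ge _ _ ha hw]
    have hv : 1/u * (t - (t - u*c - lam1*u)) - c = lam1 := by field_simp; ring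
    rw [hv]
    constructor
    · rw [abs_of_pos ht]
    · rw [abs_of_nonneg h1]

/-- Under the stepsize condition
`1/u ≥ (sign(x_i)λ₁ + Σ_j a_iᵀa_j x_j - a_iᵀy)/x_i` for every `i` with
`x_i ≠ 0`, the gradient mapping
`G_u(x) = (1/u)(x - prox_{u g₁}(x - u ∇f(x)))` is a subgradient of
`F₁ = ½‖y - A·‖₂² + λ₁‖·‖₁` at `x`. -/
theorem gradientMapping_mem_subdiff {m n : ℕ} (A : Matrix (Fin m) (Fin n) ℝ)
    (y : Fin m → ℝ) (lam1 : ℝ) (h1 : 0 ≤ lam1) (u : ℝ) (hu : 0 < u)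
    (x : Fin n → ℝ)
    (hstep : ∀ i, x i ≠ 0 →
      1 / u ≥ (Real.sign (x i) * lam1 +
        (A.transpose.mulVec (A.mulVec x)) i - (A.transpose.mulVec y) i) / x i) :
    ∀ z : Fin n → ℝ,
      (1/2) * (l2 (y - A.mulVec z))^2 + lam1 * l1 z ≥
        (1/2) * (l2 (y - A.mulVec x))^2 + lam1 * l1 x +
          ∑ i, ((1/u) • (x - soft (lam1 * u)
            (x - u • (A.transpose.mulVec (A.mulVec x - y))))) i * (z i - x i) := by
  intro z
  set c := A.transpose.mulVec (A.mulVec x - y) with hc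
  have hkey : ∀ i, (1/u * (x i - Real.sign (x i - u * c i) *
        max 0 (|x i - u * c i| - lam1*u)) - c i) * x i = lam1 * |x i| ∧
      |1/u * (x i - Real.sign (x i - u * c i) *
        max 0 (|x i - u * c i| - lam1*u)) - c i| ≤ lam1 := by
    intro i
    apply key_component lam1 u (c i) (x i) h1 hu
    intro hxi
    have hci : c i = A.transpose.mulVec (A.mulVec x) i - A.transpose.mulVec y i := by
      rw [hc, Matrix.mulVec_sub]; rfl
    have hst := hstep i hxi
    rw [hci, show Real.sign (x i) * lam1 +
        (A.transpose.mulVec (A.mulVec x) i - A.transpose.mulVec y i)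
        = Real.sign (x i) * lam1 + A.transpose.mulVec (A.mulVec x) i
          - A.transpose.mulVec y i from by ring]
    exact hst
  have hl2 : ∀ (k : ℕ) (v : Fin k → ℝ), (l2 v)^2 = ∑ j, (v j)^2 := by
    intro k v
    rw [l2, Real.sq_sqrt]
    positivity
  rw [hl2, hl2]
  simp only [l1]
  have hsum : ∑ i, ((1/u) • (x - soft (lam1*u) (x - u • c))) i * (z i - x i)
      = (∑ i, c i * (z i - x i)) +
        ∑ i, ((1/u * (x i - Real.sign (x i - u * c i) *
          max 0 (|x i - u * c i| - lam1*u)) - c i) * (z i - x i)) := by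
    rw [← Finset.sum_add_distrib]
    apply Finset.sum_congr rfl
    intro i _
    simp only [Pi.smul_apply, Pi.sub_apply, smul_eq_mul, soft]
    ring
  rw [hsum]
  have hdot : ∑ i, c i * (z i - x i)
      = ∑ j, (A.mulVec x - y) j * (A.mulVec z - A.mulVec x) j := by
    have hd2 : dotProduct c (z - x)
        = dotProduct (A.mulVec x - y) (A.mulVec (z - x)) := by
      rw [hc, Matrix.mulVec_transpose, ← Matrix.dotProduct_mulVec]
    simpa [dotProduct, Matrix.mulVec_sub] using hd2
  have hquad : ∑ j, (A.mulVec x - y) j * (A.mulVec z - A.mulVec x) j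
      ≤ (1/2) * (∑ j, ((y - A.mulVec z) j)^2)
        - (1/2) * (∑ j, ((y - A.mulVec x) j)^2) := by
    rw [Finset.mul_sum, Finset.mul_sum, ← Finset.sum_sub_distrib]
    apply Finset.sum_le_sum
    intro j _
    simp only [Pi.sub_apply]
    nlinarith [sq_nonneg (A.mulVec z j - A.mulVec x j)]
  have habs : ∑ i, ((1/u * (x i - Real.sign (x i - u * c i) *
        max 0 (|x i - u * c i| - lam1*u)) - c i) * (z i - x i))
      ≤ lam1 * (∑ i, |z i|) - lam1 * (∑ i, |x i|) := by
    rw [Finset.mul_sum, Finset.mul_sum, ← Finset.sum_sub_distrib]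
    apply Finset.sum_le_sum
    intro i _
    obtain ⟨he, hle⟩ := hkey i
    set s := 1/u * (x i - Real.sign (x i - u * c i) *
      max 0 (|x i - u * c i| - lam1*u)) - c i with hs
    have hz : s * z i ≤ lam1 * |z i| :=
      calc s * z i ≤ |s * z i| := le_abs_self _
        _ = |s| * |z i| := abs_mul _ _
        _ ≤ lam1 * |z i| := mul_le_mul_of_nonneg_right hle (abs_nonneg _)
    have hx : s * (z i - x i) = s * z i - lam1 * |x i| := by rw [← he]; ring
    linarith
  rw [hdot]
  linarith
end

section
/- Let g(z) = λ₁‖z‖₁ + λ₂‖Dz‖₁ on ℝⁿ with λ₁, λ₂ ≥ 0 and D the finite difference matrix. Then the proximal mapping of g decomposes as prox_g(x) = S_{λ₁}(T_{λ₂}(x)) for every x ∈ ℝⁿ, where T_{λ₂} = prox_{λ₂‖D·‖₁} is the 1D total-variation proximal operator and S_{λ₁} is the componentwise soft-threshold operator with threshold λ₁. -/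
/-- The finite difference operator. -/
def Dop {n : ℕ} (v : Fin (n+1) → ℝ) (i : Fin n) : ℝ := v i.succ - v i.castSucc

lemma mulVec_Dmat {n : ℕ} (v : Fin (n+1) → ℝ) : (Dmat n).mulVec v = Dop v := by
  funext i
  have hne : (i.succ : Fin (n+1)) ≠ i.castSucc := by
    simp [Fin.ext_iff]
  unfold Matrix.mulVec Dmat dotProduct Dop
  simp only [Matrix.of_apply]
  have : ∀ j : Fin (n+1),
      (if j = i.succ then (1:ℝ) else if j = i.castSucc then (-1) else 0) * v j
        = (if j = i.succ then v j else 0) + (if j = i.castSucc then -v j else 0) := by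
    intro j
    split_ifs with h h' <;> simp_all
  rw [Finset.sum_congr rfl (fun j _ => this j), Finset.sum_add_distrib,
    Finset.sum_ite_eq' _ i.succ, Finset.sum_ite_eq' _ i.castSucc]
  simp
  ring

lemma l2_sq {ι : Type*} [Fintype ι] (v : ι → ℝ) : (l2 v)^2 = ∑ i, (v i)^2 := by
  rw [l2, Real.sq_sqrt]; positivity

lemma soft_eq {lam : ℝ} (h : 0 ≤ lam) (b : ℝ) :
    Real.sign b * max 0 (|b| - lam) = max 0 (b - lam) + min 0 (b + lam) := by
  rcases lt_trichotomy b 0 with hb | hb | hb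
  · rw [Real.sign_of_neg hb, abs_of_neg hb]
    rcases le_total (-b - lam) 0 with hc | hc
    · rw [max_eq_left hc, max_eq_left (by linarith), min_eq_left (by linarith)]; ring
    · rw [max_eq_right hc, max_eq_left (by linarith), min_eq_right (by linarith)]; ring
  · subst hb
    rw [Real.sign_zero, zero_mul, max_eq_left (by linarith : (0:ℝ) - lam ≤ 0),
      min_eq_left (by linarith : (0:ℝ) ≤ 0 + lam)]
    ring
  · rw [Real.sign_of_pos hb, abs_of_pos hb]
    rcases le_total (b - lam) 0 with hc | hc
    · rw [max_eq_left hc, min_eq_left (by linarith)]; ring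
    · rw [max_eq_right hc, min_eq_left (by linarith)]; ring

lemma soft_mono {lam : ℝ} (h : 0 ≤ lam) {a b : ℝ} (hab : a ≤ b) :
    Real.sign a * max 0 (|a| - lam) ≤ Real.sign b * max 0 (|b| - lam) := by
  rw [soft_eq h, soft_eq h]
  exact add_le_add (max_le_max le_rfl (by linarith)) (min_le_min le_rfl (by linarith))

lemma soft_prox {lam : ℝ} (h : 0 ≤ lam) (b t : ℝ) :
    lam * |Real.sign b * max 0 (|b| - lam)| + (1/2) * (Real.sign b * max 0 (|b| - lam) - b)^2
      ≤ lam * |t| + (1/2) * (t - b)^2 := by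
  rcases le_or_gt (|b|) lam with hc | hc
  · rw [max_eq_left (by linarith)]
    simp only [mul_zero, zero_mul, abs_zero, zero_sub, neg_sq]
    have h1 : t * b ≤ |t| * lam := by
      calc t * b ≤ |t * b| := le_abs_self _
        _ = |t| * |b| := abs_mul t b
        _ ≤ |t| * lam := mul_le_mul_of_nonneg_left hc (abs_nonneg t)
    nlinarith [sq_nonneg t, abs_nonneg t, mul_nonneg h (abs_nonneg t)]
  · rw [max_eq_right (by linarith)]
    rcases lt_trichotomy b 0 with hb | hb | hb
    · rw [Real.sign_of_neg hb, abs_of_neg hb]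
      have ha : (-1 : ℝ) * (-b - lam) = b + lam := by ring
      rw [ha, abs_of_neg (by rw [abs_of_neg hb] at hc; linarith)]
      nlinarith [sq_nonneg (t - b - lam),
        mul_nonneg h (by linarith [neg_abs_le t] : (0:ℝ) ≤ |t| + t)]
    · subst hb; simp at hc; linarith
    · rw [Real.sign_of_pos hb, abs_of_pos hb]
      rw [one_mul, abs_of_pos (by rw [abs_of_pos hb] at hc; linarith)]
      nlinarith [sq_nonneg (t - b + lam),
        mul_nonneg h (by linarith [le_abs_self t] : (0:ℝ) ≤ |t| - t)]

lemma tele {n : ℕ} (v : Fin (n+1) → ℝ) (j : Fin (n+1)) :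
    ∑ i : Fin n, (if (i:ℕ) < (j:ℕ) then Dop v i else 0) = v j - v 0 := by
  set f : ℕ → ℝ := fun k => if h : k < n+1 then v ⟨k, h⟩ else 0 with hf
  set g : ℕ → ℝ := fun k => if k < (j:ℕ) then f (k+1) - f k else 0 with hg
  have h1 : ∀ i : Fin n, (if (i:ℕ) < (j:ℕ) then Dop v i else 0) = g i := by
    intro i
    have hi1 : (i:ℕ) + 1 < n + 1 := Nat.succ_lt_succ i.isLt
    have hi2 : (i:ℕ) < n + 1 := Nat.lt_succ_of_lt i.isLt
    simp only [hg, hf, dif_pos hi1, dif_pos hi2]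
    rfl
  rw [Finset.sum_congr rfl (fun i _ => h1 i), Fin.sum_univ_eq_sum_range g n]
  have hsub : ∑ k ∈ Finset.range ((j:ℕ)), (f (k+1) - f k) = ∑ k ∈ Finset.range n, g k := by
    rw [Finset.sum_congr rfl (fun k hk => ?_)]
    · exact Finset.sum_subset (Finset.range_subset_range.2 (Nat.lt_succ_iff.mp j.isLt))
        (fun k _ hk => if_neg (fun hlt => hk (Finset.mem_range.mpr hlt)))
    · simp only [hg, if_pos (Finset.mem_range.mp hk)]
  rw [← hsub, Finset.sum_range_sub f (j:ℕ)]
  simp only [hf, dif_pos j.isLt, dif_pos (Nat.succ_pos n)]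
  congr 1

/-- Prox decomposition for the fused-lasso penalty
`g = λ₁‖·‖₁ + λ₂‖D·‖₁`: if `T` is the TV proximal operator
(`T x` minimizes `u ↦ λ₂‖Du‖₁ + ½‖u - x‖₂²`), then `S_{λ₁}(T x)` is the
proximal mapping of `g` at `x`, i.e. `prox_g = S_{λ₁} ∘ T_{λ₂}`. -/
theorem prox_l1TV_decomposition {n : ℕ} (lam1 lam2 : ℝ)
    (h1 : 0 ≤ lam1) (h2 : 0 ≤ lam2)
    (T : (Fin (n+1) → ℝ) → (Fin (n+1) → ℝ))
    (hT : ∀ x u : Fin (n+1) → ℝ,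
      lam2 * l1 ((Dmat n).mulVec (T x)) + (1/2) * (l2 (T x - x))^2 ≤
        lam2 * l1 ((Dmat n).mulVec u) + (1/2) * (l2 (u - x))^2) :
    ∀ x u : Fin (n+1) → ℝ,
      lam1 * l1 (soft lam1 (T x)) + lam2 * l1 ((Dmat n).mulVec (soft lam1 (T x))) +
          (1/2) * (l2 (soft lam1 (T x) - x))^2 ≤
        lam1 * l1 u + lam2 * l1 ((Dmat n).mulVec u) + (1/2) * (l2 (u - x))^2 := by
  intro x u
  set y := T x with hy
  set s := soft lam1 y with hs
  have hsi : ∀ i, s i = Real.sign (y i) * max 0 (|y i| - lam1) := fun i => rfl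
  -- restated hypothesis
  have hTs : ∀ v : Fin (n+1) → ℝ,
      lam2 * (∑ i, |Dop y i|) + (1/2) * (∑ i, (y i - x i)^2) ≤
        lam2 * (∑ i, |Dop v i|) + (1/2) * (∑ i, (v i - x i)^2) := by
    intro v
    have h := hT x v
    rw [mulVec_Dmat, mulVec_Dmat, l1, l1, l2_sq, l2_sq] at h
    simpa [Pi.sub_apply] using h
  -- subgradient inequality at y
  have star : ∀ v : Fin (n+1) → ℝ,
      lam2 * (∑ i, |Dop y i|) + ∑ i, (x i - y i) * (v i - y i) ≤ lam2 * (∑ i, |Dop v i|) := by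
    intro v
    set S := ∑ i, (x i - y i) * (v i - y i) with hS
    set C := ∑ i, (v i - y i)^2 with hC
    have hCpos : 0 ≤ C := by rw [hC]; exact Finset.sum_nonneg fun i _ => sq_nonneg _
    set A := lam2 * (∑ i, |Dop v i|) - lam2 * (∑ i, |Dop y i|) - S with hA
    have key : ∀ t : ℝ, 0 < t → t ≤ 1 → 0 ≤ A + t/2 * C := by
      intro t ht ht1
      have h3 := hTs (fun i => y i + t * (v i - y i))
      have h4 : ∑ i, |Dop (fun i => y i + t * (v i - y i)) i|
          ≤ (1-t) * (∑ i, |Dop y i|) + t * (∑ i, |Dop v i|) := by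
        rw [Finset.mul_sum, Finset.mul_sum, ← Finset.sum_add_distrib]
        refine Finset.sum_le_sum fun i _ => ?_
        have hd : Dop (fun i => y i + t * (v i - y i)) i
            = (1-t) * Dop y i + t * Dop v i := by
          simp only [Dop]; ring
        rw [hd]
        calc |(1-t) * Dop y i + t * Dop v i| ≤ |(1-t) * Dop y i| + |t * Dop v i| :=
              abs_add_le _ _
          _ = (1-t) * |Dop y i| + t * |Dop v i| := by
              rw [abs_mul, abs_mul, abs_of_nonneg (by linarith), abs_of_nonneg ht.le]
      have h5 : ∑ i, (y i + t * (v i - y i) - x i)^2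
          = (∑ i, (y i - x i)^2) - 2 * t * S + t^2 * C := by
        rw [hS, hC, Finset.mul_sum, Finset.mul_sum, ← Finset.sum_sub_distrib,
          ← Finset.sum_add_distrib]
        exact Finset.sum_congr rfl fun i _ => by ring
      rw [h5] at h3
      rw [hA]
      nlinarith [mul_le_mul_of_nonneg_left h4 h2, h3, ht]
    -- conclude 0 ≤ A
    have hA0 : 0 ≤ A := by
      by_contra hcon
      push_neg at hcon
      have htpos : 0 < min 1 (-A / (C+1)) :=
        lt_min one_pos (div_pos (by linarith) (by linarith))
      have h6 := key _ htpos (min_le_left _ _)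
      have h7 : min 1 (-A / (C+1)) * (C+1) ≤ -A := by
        calc min 1 (-A / (C+1)) * (C+1) ≤ (-A / (C+1)) * (C+1) :=
              mul_le_mul_of_nonneg_right (min_le_right _ _) (by linarith)
          _ = -A := div_mul_cancel₀ _ (by linarith)
      nlinarith [htpos]
    rw [hA] at hA0; linarith
  -- sum of x - y is zero
  have hP1 : ∑ i, (x i - y i) = 0 := by
    have e1 := star (fun j => y j + 1)
    have e2 := star (fun j => y j + (-1))
    have hd : ∀ (c : ℝ) (i : Fin n), Dop (fun j => y j + c) i = Dop y i := by
      intro c i; simp only [Dop]; ring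
    simp only [hd] at e1 e2
    have he1 : ∀ j, (x j - y j) * (y j + 1 - y j) = x j - y j := fun j => by ring
    have he2 : ∀ j, (x j - y j) * (y j + (-1) - y j) = -(x j - y j) := fun j => by ring
    rw [Finset.sum_congr rfl (fun j _ => he1 j)] at e1
    rw [Finset.sum_congr rfl (fun j _ => he2 j), Finset.sum_neg_distrib] at e2
    linarith
  -- dual variables
  set w : Fin n → Fin (n+1) → ℝ := fun i j => if (i:ℕ) < (j:ℕ) then 1 else 0 with hw
  set q : Fin n → ℝ := fun i => ∑ j, (x j - y j) * w i j with hqdef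
  have hq : ∀ (i : Fin n) (t : ℝ), t * q i ≤ lam2 * (|Dop y i + t| - |Dop y i|) := by
    intro i t
    have e := star (fun j => y j + t * w i j)
    have hd : ∀ k, Dop (fun j => y j + t * w i j) k
        = Dop y k + t * (if k = i then 1 else 0) := by
      intro k
      have hwk : w i k.succ - w i k.castSucc = (if k = i then 1 else 0) := by
        simp only [hw, Fin.val_succ, Fin.coe_castSucc, Fin.ext_iff]
        split_ifs <;> try norm_num
        all_goals omega
      simp only [Dop]
      calc y k.succ + t * w i k.succ - (y k.castSucc + t * w i k.castSucc)
          = (y k.succ - y k.castSucc) + t * (w i k.succ - w i k.castSucc) := by ring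
        _ = (y k.succ - y k.castSucc) + t * (if k = i then 1 else 0) := by rw [hwk]
    simp only [hd] at e
    have hsum : ∑ k, (|Dop y k + t * (if k = i then 1 else 0)| - |Dop y k|)
        = |Dop y i + t| - |Dop y i| := by
      rw [Finset.sum_eq_single i]
      · simp
      · intro k _ hk; simp [hk]
      · intro hk; exact absurd (Finset.mem_univ i) hk
    rw [Finset.sum_sub_distrib] at hsum
    have he : ∀ j, (x j - y j) * (y j + t * w i j - y j) = t * ((x j - y j) * w i j) :=
      fun j => by ring
    rw [Finset.sum_congr rfl (fun j _ => he j), ← Finset.mul_sum] at e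
    have hqi : (∑ j, (x j - y j) * w i j) = q i := rfl
    rw [hqi] at e
    nlinarith [e, hsum, h2]
  have hqa : ∀ i, |q i| ≤ lam2 := by
    intro i
    have hb1 : |Dop y i + 1| ≤ |Dop y i| + 1 := by
      calc |Dop y i + 1| ≤ |Dop y i| + |(1:ℝ)| := abs_add_le _ _
        _ = |Dop y i| + 1 := by norm_num
    have hb2 : |Dop y i + (-1)| ≤ |Dop y i| + 1 := by
      calc |Dop y i + (-1)| ≤ |Dop y i| + |(-1:ℝ)| := abs_add_le _ _
        _ = |Dop y i| + 1 := by norm_num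
    have e1 := hq i 1
    have e2 := hq i (-1)
    rw [abs_le]
    constructor <;> nlinarith [e1, e2, hb1, hb2, h2]
  have hqb : ∀ i, q i * Dop y i = lam2 * |Dop y i| := by
    intro i
    have e := hq i (-(Dop y i))
    rw [add_neg_cancel, abs_zero] at e
    have hle : q i * Dop y i ≤ lam2 * |Dop y i| := by
      calc q i * Dop y i ≤ |q i * Dop y i| := le_abs_self _
        _ = |q i| * |Dop y i| := abs_mul _ _
        _ ≤ lam2 * |Dop y i| := mul_le_mul_of_nonneg_right (hqa i) (abs_nonneg _)
    nlinarith [e, hle]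
  -- representation
  have hrep : ∀ v : Fin (n+1) → ℝ, ∑ i, q i * Dop v i = ∑ j, (x j - y j) * v j := by
    intro v
    have h8 : ∀ i : Fin n, q i * Dop v i = ∑ j, ((x j - y j) * (w i j * Dop v i)) := by
      intro i
      have : q i = ∑ j, (x j - y j) * w i j := rfl
      rw [this, Finset.sum_mul]
      exact Finset.sum_congr rfl fun j _ => by ring
    rw [Finset.sum_congr rfl (fun i _ => h8 i), Finset.sum_comm]
    have h9 : ∀ j, ∑ i, (x j - y j) * (w i j * Dop v i) = (x j - y j) * (v j - v 0) := by
      intro j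
      rw [← Finset.mul_sum]
      congr 1
      have hwd : ∀ i : Fin n, w i j * Dop v i = (if (i:ℕ) < (j:ℕ) then Dop v i else 0) := by
        intro i; simp only [hw]; split_ifs <;> ring
      rw [Finset.sum_congr rfl (fun i _ => hwd i), tele]
    rw [Finset.sum_congr rfl (fun j _ => h9 j)]
    have h10 : ∀ j, (x j - y j) * (v j - v 0) = (x j - y j) * v j - (x j - y j) * v 0 :=
      fun j => by ring
    rw [Finset.sum_congr rfl (fun j _ => h10 j), Finset.sum_sub_distrib, ← Finset.sum_mul, hP1]
    ring
  -- part A : soft-threshold prox inequality, summed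
  have hAsum : lam1 * (∑ i, |s i|) + (1/2) * (∑ i, (s i - y i)^2)
      ≤ lam1 * (∑ i, |u i|) + (1/2) * (∑ i, (u i - y i)^2) := by
    rw [Finset.mul_sum, Finset.mul_sum, Finset.mul_sum, Finset.mul_sum,
      ← Finset.sum_add_distrib, ← Finset.sum_add_distrib]
    refine Finset.sum_le_sum fun i _ => ?_
    rw [hsi]
    exact soft_prox h1 (y i) (u i)
  -- part B
  have hBs : lam2 * (∑ i, |Dop s i|) = ∑ i, q i * Dop s i := by
    rw [Finset.mul_sum]
    refine Finset.sum_congr rfl fun i _ => ?_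
    rcases lt_trichotomy (Dop s i) 0 with hds | hds | hds
    · have hdy : Dop y i < 0 := by
        by_contra hcon
        push_neg at hcon
        have hyy : y i.succ - y i.castSucc ≥ 0 := hcon
        have : s i.castSucc ≤ s i.succ := by
          rw [hsi, hsi]; exact soft_mono h1 (by linarith)
        have hds' : s i.succ - s i.castSucc < 0 := hds
        linarith
      have hqi : q i = -lam2 := by
        have hb := hqb i
        rw [abs_of_neg hdy] at hb
        exact mul_right_cancel₀ (ne_of_lt hdy) (by linarith)
      rw [hqi, abs_of_neg hds]; ring
    · rw [hds]; simp
    · have hdy : 0 < Dop y i := by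
        by_contra hcon
        push_neg at hcon
        have hyy : y i.succ - y i.castSucc ≤ 0 := hcon
        have : s i.succ ≤ s i.castSucc := by
          rw [hsi, hsi]; exact soft_mono h1 (by linarith)
        have hds' : 0 < s i.succ - s i.castSucc := hds
        linarith
      have hqi : q i = lam2 := by
        have hb := hqb i
        rw [abs_of_pos hdy] at hb
        exact mul_right_cancel₀ (ne_of_gt hdy) (by linarith)
      rw [hqi, abs_of_pos hds]
  have hBusum : ∑ i, q i * Dop u i ≤ lam2 * (∑ i, |Dop u i|) := by
    rw [Finset.mul_sum]
    refine Finset.sum_le_sum fun i _ => ?_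
    calc q i * Dop u i ≤ |q i * Dop u i| := le_abs_self _
      _ = |q i| * |Dop u i| := abs_mul _ _
      _ ≤ lam2 * |Dop u i| := mul_le_mul_of_nonneg_right (hqa i) (abs_nonneg _)
  -- squared norm expansion
  have hexp : ∀ v : Fin (n+1) → ℝ, ∑ i, (v i - x i)^2
      = (∑ i, (v i - y i)^2) - 2 * (∑ i, (x i - y i) * v i)
        + 2 * (∑ i, (x i - y i) * y i) + ∑ i, (y i - x i)^2 := by
    intro v
    rw [Finset.mul_sum, Finset.mul_sum, ← Finset.sum_sub_distrib,
      ← Finset.sum_add_distrib, ← Finset.sum_add_distrib]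
    exact Finset.sum_congr rfl fun i _ => by ring
  -- assemble
  rw [mulVec_Dmat, mulVec_Dmat, l1, l1, l1, l1, l2_sq, l2_sq]
  simp only [Pi.sub_apply]
  linarith [hAsum, hBs, hBusum, hexp s, hexp u, hrep s, hrep u]
end
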